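/- arXiv:1802.01333 — 2 statements merged into one kernel-verified Lean document; each statement's English description precedes it below -/
import Mathlib

section
/- Let $\mu_\star$ be a finite nonnegative Borel measure on $\Omega \subset \mathbb{R}^2$ with $\mu_\star(\Omega) \le M_0$ and satisfying the clearing-out property with constant $\eta_0>0$ (as in the previous statement), and let $S$ be its concentration set. Then $S$ has finite one-dimensional Hausdorff measure; more precisely $\mathcal{H}^1(S) \le \frac{4 M_0}{\eta_0}$. -/
open MeasureTheory Metric Filter Set
open scoped ENNReal NNReal

section Aux

variable {X : Type*} [MetricSpace X]

/-- A maximal `δ`-separated subset of `A` exists. -/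
lemma exists_maximal_separated (A : Set X) {δ : ℝ} (hδ : 0 < δ) :
    ∃ T ⊆ A, (∀ x ∈ T, ∀ y ∈ T, x ≠ y → δ ≤ dist x y) ∧
      ∀ x ∈ A, ∃ y ∈ T, dist x y < δ := by
  set 𝒮 : Set (Set X) := {T | T ⊆ A ∧ ∀ x ∈ T, ∀ y ∈ T, x ≠ y → δ ≤ dist x y} with h𝒮
  have hzorn : ∀ c ⊆ 𝒮, IsChain (· ⊆ ·) c → ∃ ub ∈ 𝒮, ∀ s ∈ c, s ⊆ ub := by
    intro c hc _hchain
    refine ⟨⋃₀ c, ⟨?_, ?_⟩, fun s hs => Set.subset_sUnion_of_mem hs⟩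
    · exact Set.sUnion_subset fun s hs => (hc hs).1
    · intro a ha b hb hab
      obtain ⟨s, hs, has⟩ := ha
      obtain ⟨s', hs', hbs⟩ := hb
      rcases _hchain.total hs hs' with h | h
      · exact (hc hs').2 a (h has) b hbs hab
      · exact (hc hs).2 a has b (h hbs) hab
  obtain ⟨T, hT⟩ := zorn_subset 𝒮 hzorn
  refine ⟨T, hT.prop.1, hT.prop.2, ?_⟩
  · intro x hx
    by_cases hxT : x ∈ T
    · exact ⟨x, hxT, by simpa using hδ⟩
    by_contra hcon
    push_neg at hcon
    have hins : insert x T ∈ 𝒮 := by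
      refine ⟨Set.insert_subset hx hT.prop.1, ?_⟩
      intro a ha b hb hab
      rcases Set.mem_insert_iff.1 ha with ha' | ha'
      · rcases Set.mem_insert_iff.1 hb with hb' | hb'
        · exact absurd (ha'.trans hb'.symm) hab
        · simpa [ha'] using hcon b hb'
      · rcases Set.mem_insert_iff.1 hb with hb' | hb'
        · rw [hb', dist_comm]; exact hcon a ha'
        · exact hT.prop.2 a ha' b hb' hab
    exact hxT (hT.2 hins (Set.subset_insert x T) (Set.mem_insert x T))

end Aux

section Main

local notation "E" => EuclideanSpace ℝ (Fin 2)

/-- Covering lemma: if every point of `A` satisfies the density lower bound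
`η₀ r ≤ μ (closedBall y r)` at scales `r < δ`, then `A` can be covered by countably
many sets of diameter at most `2δ` whose total 1-dimensional content is at most
`4M₀/η₀`. -/
lemma cover_lemma (μ : Measure E) [IsFiniteMeasure μ] {η₀ M₀ : ℝ}
    (hη₀ : 0 < η₀) (hM : 0 ≤ M₀) (hM₀ : μ Set.univ ≤ ENNReal.ofReal M₀)
    {A : Set E} {δ : ℝ} (hδ : 0 < δ)
    (hdens : ∀ y ∈ A, ∀ r : ℝ, 0 < r → r < δ → η₀ * r ≤ (μ (closedBall y r)).toReal) :
    ∃ t : ℕ → Set E, A ⊆ (⋃ i, t i) ∧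
      (∀ i, EMetric.diam (t i) ≤ 2 * ENNReal.ofReal δ) ∧
      ∑' i, EMetric.diam (t i) ^ (1 : ℝ) ≤ ENNReal.ofReal (4 * M₀ / η₀) := by
  obtain ⟨T, hTA, hsep, hcov⟩ := exists_maximal_separated A hδ
  -- lower bound on the measure of balls centered at points of `T`
  have hball : ∀ y ∈ T, ENNReal.ofReal (η₀ * (δ / 2)) ≤ μ (ball y (δ / 2)) := by
    intro y hy
    have hb : η₀ * (δ / 2) ≤ (μ (ball y (δ / 2))).toReal := by
      by_contra hlt
      push_neg at hlt
      set b := (μ (ball y (δ / 2))).toReal with hbdef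
      have hb0 : 0 ≤ b := ENNReal.toReal_nonneg
      have h1 : b / η₀ < δ / 2 := by
        rw [div_lt_iff₀ hη₀]; linarith [hlt]
      obtain ⟨s, hs1, hs2⟩ := exists_between h1
      have hs0 : 0 < s := lt_of_le_of_lt (div_nonneg hb0 hη₀.le) hs1
      have hd := hdens y (hTA hy) s hs0 (hs2.trans (by linarith))
      have hsub : closedBall y s ⊆ ball y (δ / 2) := closedBall_subset_ball hs2
      have hmb : (μ (closedBall y s)).toReal ≤ b :=
        ENNReal.toReal_mono (measure_ne_top μ _) (measure_mono hsub)
      have : b < s * η₀ := (div_lt_iff₀ hη₀).1 hs1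
      nlinarith
    calc ENNReal.ofReal (η₀ * (δ / 2)) ≤ ENNReal.ofReal (μ (ball y (δ / 2))).toReal :=
          ENNReal.ofReal_le_ofReal hb
      _ = μ (ball y (δ / 2)) := ENNReal.ofReal_toReal (measure_ne_top μ _)
  -- counting bound on finite subsets of `T`
  have key : ∀ F : Finset E, ↑F ⊆ T →
      (F.card : ℝ≥0∞) * ENNReal.ofReal (η₀ * (δ / 2)) ≤ ENNReal.ofReal M₀ := by
    intro F hF
    have hdisj : (↑F : Set E).Pairwise (Function.onFun Disjoint fun y => ball y (δ / 2)) := by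
      intro a ha b hb hab
      simp only [Function.onFun]
      rw [Set.disjoint_left]
      intro z hza hzb
      have h1 : dist z a < δ / 2 := mem_ball.1 hza
      have h2 : dist z b < δ / 2 := mem_ball.1 hzb
      have : dist a b < δ := by
        calc dist a b ≤ dist a z + dist z b := dist_triangle a z b
          _ < δ := by rw [dist_comm a z]; linarith
      exact absurd this (not_lt.2 (hsep a (hF ha) b (hF hb) hab))
    calc (F.card : ℝ≥0∞) * ENNReal.ofReal (η₀ * (δ / 2))
        = ∑ _y ∈ F, ENNReal.ofReal (η₀ * (δ / 2)) := by
          rw [Finset.sum_const, nsmul_eq_mul]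
      _ ≤ ∑ y ∈ F, μ (ball y (δ / 2)) := Finset.sum_le_sum fun y hy => hball y (hF hy)
      _ = μ (⋃ y ∈ F, ball y (δ / 2)) :=
          (measure_biUnion_finset hdisj fun y _ => measurableSet_ball).symm
      _ ≤ μ Set.univ := measure_mono (Set.subset_univ _)
      _ ≤ ENNReal.ofReal M₀ := hM₀
  have hpos : (0 : ℝ) < η₀ * (δ / 2) := by positivity
  -- finiteness of `T`
  have hTfin : T.Finite := by
    by_contra hinf
    replace hinf : T.Infinite := hinf
    set K := ⌈M₀ / (η₀ * (δ / 2))⌉₊ + 1 with hK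
    obtain ⟨F, hFT, hFcard⟩ := hinf.exists_subset_card_eq K
    have hkey := key F hFT
    rw [hFcard] at hkey
    have h1 : M₀ / (η₀ * (δ / 2)) < (K : ℝ) := by
      calc M₀ / (η₀ * (δ / 2)) ≤ (⌈M₀ / (η₀ * (δ / 2))⌉₊ : ℝ) := Nat.le_ceil _
        _ < (K : ℝ) := by rw [hK]; push_cast; linarith
    have h2 : M₀ < (K : ℝ) * (η₀ * (δ / 2)) := (div_lt_iff₀ hpos).1 h1
    have h3 : ENNReal.ofReal M₀ < (K : ℝ≥0∞) * ENNReal.ofReal (η₀ * (δ / 2)) := by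
      rw [← ENNReal.ofReal_natCast, ← ENNReal.ofReal_mul (by positivity)]
      have hKpos : (0 : ℝ) < (K : ℝ) * (η₀ * (δ / 2)) := by
        apply mul_pos _ hpos
        exact_mod_cast Nat.succ_pos _
      exact (ENNReal.ofReal_lt_ofReal_iff hKpos).2 h2
    exact absurd hkey (not_le.2 h3)
  -- construct the cover from the finite set `T`
  set L : List E := hTfin.toFinset.toList with hL
  refine ⟨fun i => if h : i < L.length then closedBall (L.get ⟨i, h⟩) δ else ∅, ?_, ?_, ?_⟩
  · intro x hx
    obtain ⟨y, hyT, hyd⟩ := hcov x hx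
    have hyL : y ∈ L := by
      rw [hL, Finset.mem_toList, Set.Finite.mem_toFinset]
      exact hyT
    obtain ⟨i, hi⟩ := List.get_of_mem hyL
    refine Set.mem_iUnion.2 ⟨i.1, ?_⟩
    simp only [dif_pos i.isLt]
    simp only [Fin.eta, hi]
    exact mem_closedBall.2 hyd.le
  · intro i
    by_cases h : i < L.length
    · simp only [dif_pos h]
      rw [← Metric.emetric_closedBall hδ.le]
      exact EMetric.diam_closedBall
    · simp only [dif_neg h]
      exact (le_of_eq EMetric.diam_empty).trans zero_le
  · have hzero : ∀ i ∉ Finset.range L.length,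
        EMetric.diam (if h : i < L.length then closedBall (L.get ⟨i, h⟩) δ else ∅) ^ (1 : ℝ)
          = 0 := by
      intro i hi
      rw [Finset.mem_range, not_lt] at hi
      rw [dif_neg (not_lt.2 hi)]
      simp
      exact EMetric.diam_empty
    rw [tsum_eq_sum hzero]
    have hlen : L.length = hTfin.toFinset.card := Finset.length_toList _
    have hkey := key hTfin.toFinset (by rw [Set.Finite.coe_toFinset])
    have hmul := mul_le_mul_left hkey (ENNReal.ofReal (4 / η₀))
    have heq1 : (η₀ * (δ / 2)) * (4 / η₀) = 2 * δ := by
      field_simp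
      ring
    have heq2 : M₀ * (4 / η₀) = 4 * M₀ / η₀ := by ring
    rw [mul_assoc, ← ENNReal.ofReal_mul hpos.le, heq1, ← ENNReal.ofReal_mul hM, heq2] at hmul
    calc ∑ i ∈ Finset.range L.length,
          EMetric.diam (if h : i < L.length then closedBall (L.get ⟨i, h⟩) δ else ∅) ^ (1 : ℝ)
        ≤ ∑ _i ∈ Finset.range L.length, ENNReal.ofReal (2 * δ) := by
          refine Finset.sum_le_sum fun i hi => ?_
          rw [Finset.mem_range] at hi
          rw [dif_pos hi, ENNReal.rpow_one, ← Metric.emetric_closedBall hδ.le]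
          refine EMetric.diam_closedBall.trans ?_
          rw [ENNReal.ofReal_mul (by norm_num : (0:ℝ) ≤ 2)]
          simp [ENNReal.ofReal_ofNat]
      _ = (hTfin.toFinset.card : ℝ≥0∞) * ENNReal.ofReal (2 * δ) := by
          rw [Finset.sum_const, nsmul_eq_mul, Finset.card_range, hlen]
      _ ≤ ENNReal.ofReal (4 * M₀ / η₀) := hmul

/-- The concentration set of a finite measure of mass at most `M₀` satisfying the
clearing-out property with constant `η₀` has one-dimensional Hausdorff measure at
most `4M₀/η₀`. -/
theorem stmt_13 (Ω : Set (EuclideanSpace ℝ (Fin 2))) (hΩ : IsOpen Ω)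
    (μ : Measure (EuclideanSpace ℝ (Fin 2))) [IsFiniteMeasure μ]
    (M₀ η₀ : ℝ) (hM₀ : μ Set.univ ≤ ENNReal.ofReal M₀) (hη₀ : 0 < η₀)
    (hclear : ∀ x r, 0 < r → Metric.closedBall x r ⊆ Ω →
      (μ (Metric.closedBall x r)).toReal < η₀ * r →
      μ (Metric.closedBall x (r / 2)) = 0) :
    MeasureTheory.Measure.hausdorffMeasure 1
        {x | x ∈ Ω ∧ η₀ ≤ Filter.liminf
          (fun r => (μ (Metric.closedBall x r)).toReal / r) (nhdsWithin 0 (Set.Ioi 0))}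
      ≤ ENNReal.ofReal (4 * M₀ / η₀) := by
  set S := {x | x ∈ Ω ∧ η₀ ≤ Filter.liminf
      (fun r => (μ (Metric.closedBall x r)).toReal / r) (nhdsWithin 0 (Set.Ioi 0))} with hSdef
  -- density lower bound at points of `S`
  have hdens : ∀ y ∈ S, ∀ r : ℝ, 0 < r → closedBall y r ⊆ Ω →
      η₀ * r ≤ (μ (closedBall y r)).toReal := by
    intro y hy r hr hsub
    by_contra h
    push_neg at h
    have h0 := hclear y r hr hsub h
    have hev : ∀ᶠ s in nhdsWithin (0:ℝ) (Set.Ioi 0),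
        (μ (closedBall y s)).toReal / s = 0 := by
      filter_upwards [Ioo_mem_nhdsGT_of_mem
        (Set.mem_Ico.2 ⟨le_refl (0:ℝ), half_pos hr⟩)] with s hs
      have : μ (closedBall y s) = 0 :=
        measure_mono_null (closedBall_subset_closedBall hs.2.le) h0
      simp [this]
    have hlim : Filter.liminf
        (fun s => (μ (closedBall y s)).toReal / s) (nhdsWithin (0:ℝ) (Set.Ioi 0)) = 0 := by
      rw [Filter.liminf_congr hev]
      exact Filter.liminf_const 0
    have := hy.2
    rw [hlim] at this
    linarith
  by_cases hM : 0 ≤ M₀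
  · -- main case
    set Sk : ℕ → Set (EuclideanSpace ℝ (Fin 2)) :=
      fun k => {y ∈ S | closedBall y (1 / (k + 1)) ⊆ Ω} with hSk
    have hmono : Monotone Sk := by
      intro k l hkl y hy
      refine ⟨hy.1, Set.Subset.trans (closedBall_subset_closedBall ?_) hy.2⟩
      have h1 : (0:ℝ) < k + 1 := by positivity
      have h2 : (k:ℝ) + 1 ≤ (l:ℝ) + 1 := by exact_mod_cast by omega
      exact one_div_le_one_div_of_le h1 h2
    have hS : S = ⋃ k, Sk k := by
      ext y
      constructor
      · intro hy
        obtain ⟨ε, hε, hball⟩ := Metric.isOpen_iff.1 hΩ y hy.1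
        obtain ⟨k, hk⟩ := exists_nat_one_div_lt (half_pos hε)
        refine Set.mem_iUnion.2 ⟨k, hy, ?_⟩
        refine Set.Subset.trans (closedBall_subset_ball ?_) hball
        calc (1:ℝ) / (k + 1) < ε / 2 := hk
          _ < ε := by linarith
      · intro hy
        obtain ⟨k, hk⟩ := Set.mem_iUnion.1 hy
        exact hk.1
    rw [hS, Directed.measure_iUnion (hmono.directed_le)]
    refine iSup_le fun k => ?_
    set c : ℝ := 1 / (k + 1) with hc
    have hcpos : (0:ℝ) < c := by positivity
    have hcovn : ∀ n : ℕ, ∃ t : ℕ → Set (EuclideanSpace ℝ (Fin 2)),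
        Sk k ⊆ (⋃ i, t i) ∧
        (∀ i, EMetric.diam (t i) ≤ 2 * ENNReal.ofReal (c / (n + 1))) ∧
        ∑' i, EMetric.diam (t i) ^ (1 : ℝ) ≤ ENNReal.ofReal (4 * M₀ / η₀) := by
      intro n
      have hδpos : (0:ℝ) < c / (n + 1) := by positivity
      refine cover_lemma μ hη₀ hM hM₀ hδpos ?_
      intro y hy r hr hrδ
      have hrc : r < c := lt_of_lt_of_le hrδ (by
        rw [div_le_iff₀ (by positivity : (0:ℝ) < (n:ℝ) + 1)]
        nlinarith [hcpos, (by exact_mod_cast Nat.zero_le n : (0:ℝ) ≤ (n:ℝ))])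
      exact hdens y hy.1 r hr ((closedBall_subset_closedBall hrc.le).trans hy.2)
    choose t hcov hdiam hsum using hcovn
    have hr0 : Filter.Tendsto (fun n : ℕ => 2 * ENNReal.ofReal (c / (n + 1)))
        Filter.atTop (nhds 0) := by
      have h1 : Filter.Tendsto (fun n : ℕ => c / (n + 1)) Filter.atTop (nhds 0) := by
        have := tendsto_one_div_add_atTop_nhds_zero_nat (𝕜 := ℝ)
        have h2 : (fun n : ℕ => c / (n + 1)) = fun n : ℕ => c * (1 / (n + 1)) := by
          funext n; ring
        rw [h2]
        simpa using this.const_mul c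
      have h3 : Filter.Tendsto (fun n : ℕ => ENNReal.ofReal (c / (n + 1)))
          Filter.atTop (nhds 0) := by
        have := (ENNReal.continuous_ofReal.tendsto 0).comp h1
        simpa [Function.comp_def] using this
      have h4 := ENNReal.Tendsto.const_mul h3 (Or.inr (by norm_num : (2:ℝ≥0∞) ≠ ⊤))
      simpa using h4
    have hbound := MeasureTheory.Measure.hausdorffMeasure_le_liminf_tsum 1 (Sk k)
      (fun n : ℕ => 2 * ENNReal.ofReal (c / (n + 1))) hr0 t
      (Filter.Eventually.of_forall hdiam) (Filter.Eventually.of_forall hcov)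
    refine hbound.trans ?_
    calc Filter.liminf (fun n => ∑' i, EMetric.diam (t n i) ^ (1:ℝ)) Filter.atTop
        ≤ Filter.liminf (fun _n : ℕ => ENNReal.ofReal (4 * M₀ / η₀)) Filter.atTop :=
          Filter.liminf_le_liminf (Filter.Eventually.of_forall hsum)
      _ = ENNReal.ofReal (4 * M₀ / η₀) := Filter.liminf_const _
  · -- degenerate case `M₀ < 0`: the measure is zero and `S` is empty
    push_neg at hM
    have hμ0 : μ Set.univ = 0 := by
      have : ENNReal.ofReal M₀ = 0 := ENNReal.ofReal_eq_zero.2 hM.le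
      rw [this] at hM₀
      exact le_antisymm hM₀ zero_le
    have hSempty : S = ∅ := by
      ext y
      simp only [Set.mem_empty_iff_false, iff_false]
      intro hy
      obtain ⟨ε, hε, hball⟩ := Metric.isOpen_iff.1 hΩ y hy.1
      have hsub : closedBall y (ε / 2) ⊆ Ω :=
        Set.Subset.trans (closedBall_subset_ball (by linarith)) hball
      have := hdens y hy (ε / 2) (half_pos hε) hsub
      have hz : μ (closedBall y (ε / 2)) = 0 :=
        measure_mono_null (Set.subset_univ _) hμ0
      rw [hz] at this
      simp at this
      nlinarith
    rw [hSempty]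
    simp
end Main
end

section
/- Let $(E_n)_{0 \le n \le N}$ be positive reals satisfying $E_{n+1} \le 2\,C\,(\sqrt{2})^n E_n^{3/2}$ for $0 \le n \le N-1$, with $C \ge 1$, and set $\gamma_0 = \sum_{k=0}^\infty (2/3)^{k+1}\big(\tfrac{\log 2}{2}k + \log(2C)\big)$. If $E_0 \le \exp(-(1+\gamma_0))$, then $E_n \le \exp\big(-(3/2)^n\big)$ for all $0 \le n \le N$. -/
/-- Superexponential energy decay: if `E_{n+1} ≤ 2C √2ⁿ E_n^{3/2}` for `n ≤ N-1`
with `C ≥ 1`, and `E₀ ≤ exp(-(1+γ₀))` where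
`γ₀ = ∑_{k} (2/3)^{k+1} ((log 2 / 2) k + log (2C))`, then
`E_n ≤ exp(-(3/2)ⁿ)` for all `n ≤ N`. -/
theorem stmt_14 (E : ℕ → ℝ) (N : ℕ) (C γ₀ : ℝ) (hC : 1 ≤ C)
    (hpos : ∀ n ≤ N, 0 < E n)
    (hrec : ∀ n, n + 1 ≤ N →
      E (n + 1) ≤ 2 * C * Real.sqrt 2 ^ n * E n ^ ((3 : ℝ) / 2))
    (hγ₀ : γ₀ = ∑' m : ℕ,
      (2 / 3 : ℝ) ^ (m + 1) * (Real.log 2 / 2 * (m : ℝ) + Real.log (2 * C)))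
    (hE₀ : E 0 ≤ Real.exp (-(1 + γ₀))) :
    ∀ n ≤ N, E n ≤ Real.exp (-(3 / 2 : ℝ) ^ n) := by
  have h2C : (0:ℝ) < 2 * C := by linarith
  set b : ℕ → ℝ := fun k => Real.log 2 / 2 * (k : ℝ) + Real.log (2 * C) with hbdef
  have hlog2 : (0:ℝ) ≤ Real.log 2 := Real.log_nonneg (by norm_num)
  have hlog2C : (0:ℝ) ≤ Real.log (2 * C) := Real.log_nonneg (by linarith)
  have hbnonneg : ∀ k : ℕ, 0 ≤ b k := by
    intro k
    have hk : (0:ℝ) ≤ (k:ℝ) := Nat.cast_nonneg k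
    have hm : (0:ℝ) ≤ Real.log 2 / 2 * (k:ℝ) :=
      mul_nonneg (div_nonneg hlog2 (by norm_num)) hk
    simp only [hbdef]
    linarith
  have hγ : γ₀ = ∑' m : ℕ, (2/3:ℝ) ^ (m+1) * b m := hγ₀
  have hsum : Summable (fun m : ℕ => (2/3:ℝ) ^ (m+1) * b m) := by
    have h1 : Summable (fun m : ℕ => (m:ℝ) * (2/3:ℝ) ^ m) := by
      have := summable_pow_mul_geometric_of_norm_lt_one (R := ℝ) 1 (r := 2/3)
        (by rw [Real.norm_eq_abs, abs_of_nonneg (by norm_num : (0:ℝ) ≤ 2/3)]; norm_num)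
      simpa using this
    have h2 : Summable (fun m : ℕ => (2/3:ℝ) ^ m) :=
      summable_geometric_of_lt_one (by norm_num) (by norm_num)
    have h3 : Summable (fun m : ℕ =>
        (2/3:ℝ) * (Real.log 2 / 2 * ((m:ℝ) * (2/3:ℝ)^m) + Real.log (2*C) * (2/3:ℝ)^m)) :=
      ((h1.mul_left _).add (h2.mul_left _)).mul_left _
    refine h3.congr fun m => ?_
    simp only [hbdef]
    ring
  -- the recursion for A n = -log (E n)
  have hA : ∀ n, n + 1 ≤ N →
      (3/2:ℝ) * (-Real.log (E n)) - b n ≤ -Real.log (E (n+1)) := by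
    intro n hn
    have hEn := hpos n (by omega)
    have hEn1 := hpos (n+1) hn
    have hlog := Real.log_le_log hEn1 (hrec n hn)
    have hsq : (0:ℝ) < Real.sqrt 2 ^ n := by positivity
    have hrp : (0:ℝ) < E n ^ ((3:ℝ)/2) := Real.rpow_pos_of_pos hEn _
    rw [Real.log_mul (by positivity) (ne_of_gt hrp),
        Real.log_mul (ne_of_gt h2C) (ne_of_gt hsq),
        Real.log_pow, Real.log_sqrt (by norm_num),
        Real.log_rpow hEn] at hlog
    simp only [hbdef]
    push_cast
    nlinarith [hlog]
  -- main induction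
  have key : ∀ n, n ≤ N →
      (3/2:ℝ)^n * ((-Real.log (E 0)) - ∑ k ∈ Finset.range n, (2/3:ℝ)^(k+1) * b k)
        ≤ -Real.log (E n) := by
    intro n
    induction n with
    | zero => intro _; simp
    | succ n ih =>
      intro hn
      have h1 := ih (by omega)
      have h2 := hA n hn
      have hstep : ((3/2:ℝ)^(n+1) * (2/3:ℝ)^(n+1)) = 1 := by
        rw [← mul_pow]; norm_num
      rw [Finset.sum_range_succ]
      have e : (3/2:ℝ)^(n+1) * ((-Real.log (E 0)) -
            (∑ k ∈ Finset.range n, (2/3:ℝ)^(k+1) * b k + (2/3:ℝ)^(n+1) * b n))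
          = (3/2:ℝ) * ((3/2:ℝ)^n * ((-Real.log (E 0)) -
              ∑ k ∈ Finset.range n, (2/3:ℝ)^(k+1) * b k))
            - ((3/2:ℝ)^(n+1) * (2/3:ℝ)^(n+1)) * b n := by ring
      rw [e, hstep, one_mul]
      have h3 : (3/2:ℝ) * ((3/2:ℝ)^n * ((-Real.log (E 0)) -
          ∑ k ∈ Finset.range n, (2/3:ℝ)^(k+1) * b k)) ≤ (3/2:ℝ) * (-Real.log (E n)) :=
        mul_le_mul_of_nonneg_left h1 (by norm_num)
      linarith
  intro n hn
  have hS : ∑ k ∈ Finset.range n, (2/3:ℝ)^(k+1) * b k ≤ γ₀ := by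
    rw [hγ]
    exact Summable.sum_le_tsum _ (fun i _ => mul_nonneg (by positivity) (hbnonneg i)) hsum
  have hA0 : 1 + γ₀ ≤ -Real.log (E 0) := by
    have h := Real.log_le_log (hpos 0 (Nat.zero_le N)) hE₀
    rw [Real.log_exp] at h
    linarith
  have h1 : (3/2:ℝ)^n * 1 ≤ (3/2:ℝ)^n *
      ((-Real.log (E 0)) - ∑ k ∈ Finset.range n, (2/3:ℝ)^(k+1) * b k) :=
    mul_le_mul_of_nonneg_left (by linarith) (by positivity)
  have h2 := key n hn
  have hlogE : Real.log (E n) ≤ -(3/2:ℝ)^n := by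
    rw [mul_one] at h1; linarith
  calc E n = Real.exp (Real.log (E n)) := (Real.exp_log (hpos n hn)).symm
    _ ≤ Real.exp (-(3/2:ℝ)^n) := Real.exp_le_exp.mpr hlogE
end
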